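/- arXiv:1612.05997 — 4 statements merged into one kernel-verified Lean document; each statement's English description precedes it below -/
import Mathlib

section
/- Let k ≥ 2 and let t = 2^{2k} − 2^k + 1 be the Kasami–Welch number. Then the number of equal-degree terms of φ_t(x,y) ∈ F_2[x,y] — that is, the number of integers m ≥ 1 such that the coefficient of x^m y^m in φ_t(x,y) is nonzero — is odd. -/
/-!
Substituting `x = T`, `y = T⁻¹` sends `x^a y^b` to `T^(a-b)`, so modulo 2 the number of
equal-degree terms of `φ` is `φ(0,0) + [T⁰] φ(T, T⁻¹)`. Setting `y = 0` and comparing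
coefficients of `x` gives `φ(0,0) = t = 1`.

In characteristic 2 the denominator becomes `(T + T⁻¹)² = T² + T⁻²`. For `t = 4u + 1` the
numerator is `T^t + T^(-t) + 1 + T^(-t) (T² + T + 1)^t` with
`(T² + T + 1)^t = (T⁸ + T⁴ + 1)^u (T² + T + 1)`, so it has no terms in degrees `≡ 2 (mod 4)`.
Hence the coefficients `c_n` of `φ(T, T⁻¹)` satisfy `c_{4j} + c_{4j+4} = 0`, and since only
finitely many are nonzero, `c_0 = 0`.
-/

open MvPolynomial LaurentPolynomial

lemma Polynomial.coeff_toLaurent_natCast {R : Type*} [Semiring R] (f : Polynomial R) (n : ℕ) :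
    f.toLaurent.coeff n = f.coeff n := by
  rw [coeff_toLaurent]
  exact Finsupp.mapDomain_apply Nat.castEmbedding.injective _ n

namespace KasamiWelch

noncomputable def phiDenom (R : Type*) [CommSemiring R] : MvPolynomial (Fin 2) R :=
  (X 0 + X 1) * (X 0 + 1) * (X 1 + 1)

noncomputable def phiNumer (R : Type*) [CommSemiring R] (t : ℕ) : MvPolynomial (Fin 2) R :=
  X 0 ^ t + X 1 ^ t + 1 + (X 0 + X 1 + 1) ^ t

section Diagonal

variable {R : Type*} [CommSemiring R]

noncomputable def diagonalMap : MvPolynomial (Fin 2) R →ₐ[R] R[T;T⁻¹] :=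
  aeval ![T 1, T (-1)]

@[simp] lemma diagonalMap_X_zero : diagonalMap (X 0 : MvPolynomial (Fin 2) R) = T 1 := by
  simp [diagonalMap]

@[simp] lemma diagonalMap_X_one : diagonalMap (X 1 : MvPolynomial (Fin 2) R) = T (-1) := by
  simp [diagonalMap]

lemma diagonalMap_monomial (s : Fin 2 →₀ ℕ) (c : R) :
    diagonalMap (monomial s c) = .single ((s 0 : ℤ) - s 1) c := by
  rw [diagonalMap, aeval_monomial, Finsupp.prod_fintype _ _ fun _ => pow_zero _,
    Fin.prod_univ_two]
  simp only [Matrix.cons_val_zero, Matrix.cons_val_one, T_pow, ← T_add, single_eq_C_mul_T]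
  congr 2
  ring

lemma coeff_diagonalMap (p : MvPolynomial (Fin 2) R) (n : ℤ) :
    (diagonalMap p).coeff n = ∑ s ∈ p.support with (s 0 : ℤ) - s 1 = n, p.coeff s := by
  conv_lhs => rw [p.as_sum, map_sum]
  rw [AddMonoidAlgebra.coeff_sum, Finset.sum_apply', Finset.sum_filter]
  refine Finset.sum_congr rfl fun s _ => ?_
  rw [diagonalMap_monomial, AddMonoidAlgebra.coeff_single, Finsupp.single_apply]

lemma coeff_zero_diagonalMap (p : MvPolynomial (Fin 2) R) :
    (diagonalMap p).coeff 0 =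
      p.coeff 0 + ∑ s ∈ p.support with 1 ≤ s 0 ∧ s 0 = s 1, p.coeff s := by
  rw [coeff_diagonalMap, ← Finset.sum_filter_add_sum_filter_not _ (fun s => 1 ≤ s 0),
    Finset.filter_filter, Finset.filter_filter, add_comm]
  congr 1
  · have hzero : ∀ s ∈ p.support, (s 0 : ℤ) - s 1 = 0 ∧ ¬1 ≤ s 0 ↔ s = 0 := fun s _ => by
      simp only [Finsupp.ext_iff, Fin.forall_fin_two, Finsupp.coe_zero, Pi.zero_apply]
      omega
    rw [Finset.filter_congr hzero, Finset.sum_filter, Finset.sum_ite_eq']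
    split_ifs with h
    · rfl
    · exact (notMem_support_iff.mp h).symm
  · exact Finset.sum_congr (Finset.filter_congr fun s _ => by omega) fun _ _ => rfl

lemma T_one_add_T_neg_one_add_one_pow (t : ℕ) :
    (T 1 + T (-1) + 1 : R[T;T⁻¹]) ^ t =
      T (-t) * ((Polynomial.X ^ 2 + Polynomial.X + 1 : Polynomial R) ^ t).toLaurent := by
  have h : (T 1 + T (-1) + 1 : R[T;T⁻¹]) =
      T (-1) * (Polynomial.X ^ 2 + Polynomial.X + 1 : Polynomial R).toLaurent := by
    simp only [map_add, map_pow, map_one, Polynomial.toLaurent_X, T_pow, mul_add, ← T_add,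
      mul_one]
    norm_num [add_right_comm]
  rw [h, mul_pow, T_pow, map_pow, mul_neg_one]

lemma coeff_zero_aeval_X_zero (p : MvPolynomial (Fin 2) R) :
    (aeval ![(Polynomial.X : Polynomial R), 0] p).coeff 0 = p.coeff 0 := by
  induction p using MvPolynomial.induction_on with
  | C a => simp
  | add p q hp hq => simp [hp, hq]
  | mul_X p i hp => fin_cases i <;> simp [coeff_mul_X']

end Diagonal

/-- `f_{2dj} = (-1)^j f_0` for all `j`, and `f` has finite support. -/
lemma coeff_zero_eq_zero_of_coeff_mul_T_add_T_neg {R : Type*} [Ring R] (f : R[T;T⁻¹]) {d : ℤ}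
    (hd : d ≠ 0) (h : ∀ j : ℕ, (f * (T d + T (-d))).coeff (2 * d * j + d) = 0) :
    f.coeff 0 = 0 := by
  have hpow (j : ℕ) : f.coeff (2 * d * j) = (-1) ^ j * f.coeff 0 := by
    induction j with
    | zero => simp
    | succ j ih =>
      have hj := h j
      simp only [mul_add, T, AddMonoidAlgebra.coeff_add, Finsupp.add_apply,
        AddMonoidAlgebra.coeff_mul_single_apply, mul_one, neg_neg, add_assoc,
        add_neg_cancel, add_zero] at hj
      rw [show 2 * d * ((j + 1 : ℕ) : ℤ) = 2 * d * j + (d + d) by push_cast; ring,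
        eq_neg_of_add_eq_zero_right hj, ih, pow_succ, mul_neg_one, neg_mul]
  have hinj : Function.Injective fun j : ℕ => 2 * d * j := fun i j hij => by
    simpa [hd] using hij
  obtain ⟨_, ⟨j, rfl⟩, hj⟩ :=
    (Set.infinite_range_of_injective hinj).exists_notMem_finset f.coeff.support
  simpa [Finsupp.notMem_support_iff.mp hj] using (hpow j).symm

section CharTwo

variable {R : Type*} [CommRing R] [CharP R 2]

lemma X_sq_add_X_add_one_pow_four :
    (Polynomial.X ^ 2 + Polynomial.X + 1 : Polynomial R) ^ 4 =
      Polynomial.expand R 4 (Polynomial.X ^ 2 + Polynomial.X + 1) := by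
  rw [show 4 = 2 * 2 from rfl, pow_mul]
  simp only [add_pow_char, ← pow_mul, map_add, map_pow, Polynomial.expand_X, map_one, one_pow]

lemma coeff_X_sq_add_X_add_one_pow_eq_zero {t n : ℕ} (ht : t % 4 = 1) (hn : n % 4 = 3) :
    ((Polynomial.X ^ 2 + Polynomial.X + 1 : Polynomial R) ^ t).coeff n = 0 := by
  obtain ⟨u, rfl⟩ : ∃ u, t = 4 * u + 1 := ⟨t / 4, by omega⟩
  obtain ⟨m, rfl⟩ : ∃ m, n = m + 3 := ⟨n - 3, by omega⟩
  rw [pow_succ, pow_mul, X_sq_add_X_add_one_pow_four, ← map_pow, mul_add, mul_add, mul_one,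
    Polynomial.coeff_add, Polynomial.coeff_add, show m + 3 = m + 1 + 2 from rfl,
    Polynomial.coeff_mul_X_pow, show m + 1 + 2 = m + 2 + 1 from rfl, Polynomial.coeff_mul_X]
  simp only [Polynomial.coeff_expand four_pos, if_neg (show ¬4 ∣ m + 1 by omega),
    if_neg (show ¬4 ∣ m + 2 by omega), if_neg (show ¬4 ∣ m + 2 + 1 by omega), add_zero]

lemma diagonalMap_phiDenom : diagonalMap (phiDenom R) = T 2 + T (-2) := by
  have hab : (T 1 * T (-1) : R[T;T⁻¹]) = 1 := by rw [← T_add]; simp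
  have ha : (T 1 ^ 2 : R[T;T⁻¹]) = T 2 := by rw [T_pow]; norm_num
  have hb : (T (-1) ^ 2 : R[T;T⁻¹]) = T (-2) := by rw [T_pow]; norm_num
  have h2 : (2 : R[T;T⁻¹]) = 0 := by
    rw [← map_ofNat LaurentPolynomial.C 2, CharTwo.two_eq_zero, map_zero]
  simp only [phiDenom, map_mul, map_add, map_one, diagonalMap_X_zero, diagonalMap_X_one]
  linear_combination (T 1 + T (-1) + 2) * hab + ha + hb + (T 1 + T (-1) + 1) * h2

lemma coeff_diagonalMap_phiNumer_eq_zero {t : ℕ} (ht : t % 4 = 1) (j : ℕ) :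
    (diagonalMap (phiNumer R t)).coeff (4 * j + 2) = 0 := by
  have hT (n : ℤ) (hn : n ≠ 4 * j + 2) : (T n : R[T;T⁻¹]).coeff (4 * j + 2) = 0 := by
    rw [T_apply, if_neg hn]
  simp only [phiNumer, map_add, map_pow, map_one, diagonalMap_X_zero, diagonalMap_X_one]
  rw [T_one_add_T_neg_one_add_one_pow, T_pow, T_pow, ← T_zero]
  simp only [AddMonoidAlgebra.coeff_add, Finsupp.add_apply]
  rw [hT _ (by omega), hT _ (by omega), hT _ (by omega), T,
    AddMonoidAlgebra.coeff_single_mul_apply,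
    show -(-(t : ℤ)) + (4 * j + 2) = ((t + 4 * j + 2 : ℕ) : ℤ) by push_cast; ring,
    Polynomial.coeff_toLaurent_natCast, coeff_X_sq_add_X_add_one_pow_eq_zero ht (by omega)]
  simp

lemma coeff_zero_eq_one_of_mul_phiDenom_eq {t : ℕ} (ht : Odd t) (ht1 : 1 < t)
    {phi : MvPolynomial (Fin 2) R} (hphi : phi * phiDenom R = phiNumer R t) :
    phi.coeff 0 = 1 := by
  have h := congrArg (fun p => (aeval ![(Polynomial.X : Polynomial R), 0] p).coeff 1) hphi
  simp only [phiDenom, phiNumer, map_mul, map_add, map_pow, map_one, aeval_X,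
    Matrix.cons_val_zero, Matrix.cons_val_one, add_zero, zero_add] at h
  rw [show ∀ q : Polynomial R, q * (Polynomial.X * (Polynomial.X + 1) * 1) =
      q * (Polynomial.X + 1) * Polynomial.X from fun q => by ring,
    Polynomial.coeff_mul_X, Polynomial.mul_coeff_zero, coeff_zero_aeval_X_zero] at h
  obtain ⟨m, rfl⟩ := ht
  simpa [zero_pow (show 2 * m + 1 ≠ 0 by omega), Polynomial.coeff_X_pow, Polynomial.coeff_one,
    Polynomial.coeff_X_add_one_pow, show m ≠ 0 by omega, CharTwo.two_eq_zero] using h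

end CharTwo

lemma sum_coeff_eq_card {σ : Type*} (p : MvPolynomial σ (ZMod 2)) {s : Finset (σ →₀ ℕ)}
    (hs : s ⊆ p.support) : ∑ m ∈ s, p.coeff m = s.card := by
  rw [Finset.card_eq_sum_ones, Nat.cast_sum, Nat.cast_one]
  refine Finset.sum_congr rfl fun m hm => ?_
  have h := mem_support_iff.mp (hs hm)
  generalize p.coeff m = a at h ⊢
  fin_cases a
  exacts [absurd rfl h, rfl]

lemma kasamiWelch_mod_four {k : ℕ} (hk : 2 ≤ k) : (2 ^ (2 * k) - 2 ^ k + 1) % 4 = 1 := by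
  have h : 2 ^ 2 ∣ 2 ^ (2 * k) - 2 ^ k :=
    Nat.dvd_sub (pow_dvd_pow 2 (by omega)) (pow_dvd_pow 2 hk)
  omega

lemma one_lt_kasamiWelch {k : ℕ} (hk : 1 ≤ k) : 1 < 2 ^ (2 * k) - 2 ^ k + 1 := by
  have h : 2 ^ k < 2 ^ (2 * k) := Nat.pow_lt_pow_right (by norm_num) (by omega)
  omega

end KasamiWelch

open KasamiWelch

/-- For the Kasami–Welch number `t = 2^(2k) - 2^k + 1` (k ≥ 2), the number of
"equal-degree" terms `x^m y^m` (m ≥ 1) appearing with nonzero coefficient in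
`φ_t(x,y) ∈ F_2[x,y]` is odd.  Here `φ_t(x,y)` is the (unique) quotient of
`x^t + y^t + 1 + (x+y+1)^t` by `(x+y)(x+1)(y+1)` in `F_2[x,y]`. -/
theorem kasami_phi_odd_ED_terms (k : ℕ) (hk : 2 ≤ k) (t : ℕ)
    (ht : t = 2 ^ (2 * k) - 2 ^ k + 1)
    (phi : MvPolynomial (Fin 2) (ZMod 2))
    (hphi : phi * ((X 0 + X 1) * (X 0 + 1) * (X 1 + 1)) =
      X 0 ^ t + X 1 ^ t + 1 + (X 0 + X 1 + 1) ^ t) :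
    Odd ((phi.support.filter (fun s => 1 ≤ s 0 ∧ s 0 = s 1)).card) := by
  change phi * phiDenom _ = phiNumer _ t at hphi
  have ht4 : t % 4 = 1 := ht ▸ kasamiWelch_mod_four hk
  have hc0 : phi.coeff 0 = 1 :=
    coeff_zero_eq_one_of_mul_phiDenom_eq (Nat.odd_iff.mpr (by omega))
      (ht ▸ one_lt_kasamiWelch (by omega)) hphi
  have hdiag : (diagonalMap phi).coeff 0 = 0 := by
    refine coeff_zero_eq_zero_of_coeff_mul_T_add_T_neg _ two_ne_zero fun j => ?_
    rw [← diagonalMap_phiDenom, ← map_mul, hphi, show 2 * 2 * (j : ℤ) + 2 = 4 * j + 2 by ring]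
    exact coeff_diagonalMap_phiNumer_eq_zero ht4 j
  rw [coeff_zero_diagonalMap, hc0, sum_coeff_eq_card phi (Finset.filter_subset _ _)] at hdiag
  rw [← ZMod.natCast_eq_one_iff_odd, eq_neg_of_add_eq_zero_right hdiag, ZMod.neg_eq_self_mod_two]
end

section
/- Let k ≥ 2 and let t = 2^{2k} − 2^k + 1 be the Kasami–Welch number. Then the multiplicity of φ_t(x,y) ∈ F_2[x,y] at the point p = (1,1) equals 2^k − 2, and the lowest-degree nonzero homogeneous component of φ_t(x+1, y+1) (the tangent cone at p) is a product of 2^k − 2 pairwise non-proportional linear forms over an algebraic closure of F_2. -/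
open MvPolynomial

/-! Write `q = 2 ^ k`, so that `t = q (q - 1) + 1`. In characteristic 2,
`(1 + w) ^ t = (1 + w) (1 + w ^ q) ^ (q - 1) ≡ (1 + w) (1 + w ^ q) mod w ^ (2q)`
because `q - 1` is odd. Summing over `w = x, y, x + y` gives
`φ_t(x + 1, y + 1) · (x + y) x y ≡ x y ^ q + x ^ q y = (x + y) x y · T mod (x, y) ^ (2q)`
with `T = (x ^ (q - 1) - y ^ (q - 1)) / (x - y)`. Cancelling the cubic `(x + y) x y` in the
power series ring, `φ_t(x + 1, y + 1) - T` has order at least `2q - 3 > q - 2`, so the tangent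
cone is `T`. Over an algebraically closed field, `T = ∏ (x - ζ y)` over the `(q - 1)`-th roots
of unity `ζ ≠ 1`, which are distinct since `q - 1` is odd. -/

section CharTwo
variable {R : Type*} [CommRing R] [CharP R 2]

theorem CharTwo.natCast_two_pow_sub_one {k : ℕ} (hk : k ≠ 0) : ((2 ^ k - 1 : ℕ) : R) = 1 := by
  rw [Nat.cast_sub Nat.one_le_two_pow, Nat.cast_pow, Nat.cast_ofNat, Nat.cast_one,
    CharTwo.two_eq_zero, zero_pow hk, zero_sub, CharTwo.neg_eq]

theorem exists_one_add_pow_kasami_eq {k : ℕ} (hk : k ≠ 0) (w : R) :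
    ∃ g : R, (1 + w) ^ (2 ^ k * (2 ^ k - 1) + 1) =
      (1 + w) * (1 + w ^ 2 ^ k) + w ^ 2 ^ (k + 1) * g := by
  obtain ⟨d, hd⟩ := Polynomial.binomExpansion (Polynomial.X ^ (2 ^ k - 1)) (1 : R) (w ^ 2 ^ k)
  simp only [Polynomial.eval_pow, Polynomial.eval_X, Polynomial.derivative_X_pow,
    Polynomial.eval_mul, Polynomial.eval_C, one_pow, CharTwo.natCast_two_pow_sub_one hk,
    mul_one] at hd
  refine ⟨(1 + w) * d, ?_⟩
  rw [pow_succ, pow_mul, add_pow_char_pow, one_pow, hd, pow_succ 2 k, pow_mul]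
  ring

theorem exists_kasami_sum_eq {k : ℕ} (hk : k ≠ 0) (x y : R) : ∃ g₀ g₁ g₂ : R,
    (x + 1) ^ (2 ^ (2 * k) - 2 ^ k + 1) + (y + 1) ^ (2 ^ (2 * k) - 2 ^ k + 1) + 1 +
        (x + y + 1) ^ (2 ^ (2 * k) - 2 ^ k + 1) =
      x * y ^ 2 ^ k + x ^ 2 ^ k * y +
        (x ^ 2 ^ (k + 1) * g₀ + y ^ 2 ^ (k + 1) * g₁ + (x + y) ^ 2 ^ (k + 1) * g₂) := by
  have ht : 2 ^ (2 * k) - 2 ^ k + 1 = 2 ^ k * (2 ^ k - 1) + 1 := by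
    rw [Nat.mul_sub, mul_one, ← pow_add, two_mul]
  obtain ⟨g₀, h₀⟩ := exists_one_add_pow_kasami_eq hk x
  obtain ⟨g₁, h₁⟩ := exists_one_add_pow_kasami_eq hk y
  obtain ⟨g₂, h₂⟩ := exists_one_add_pow_kasami_eq hk (x + y)
  refine ⟨g₀, g₁, g₂, ?_⟩
  rw [ht, add_comm x 1, add_comm y 1, add_comm (x + y) 1, h₀, h₁, h₂, add_pow_char_pow]
  linear_combination (2 + x + y + x ^ 2 ^ k + y ^ 2 ^ k + x * x ^ 2 ^ k + y * y ^ 2 ^ k : R) *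
    CharTwo.two_eq_zero (R := R)

end CharTwo

theorem Finset.exists_injective_prod_fin_eq {α M : Type*} [CommMonoid M] (s : Finset α) {m : ℕ}
    (hs : s.card = m) (f : α → M) :
    ∃ e : Fin m → α, Function.Injective e ∧ ∏ i, f (e i) = ∏ x ∈ s, f x := by
  let e := s.equivFinOfCardEq hs
  refine ⟨fun i => e.symm i, Subtype.val_injective.comp e.symm.injective, ?_⟩
  rw [← Finset.prod_coe_sort s f]
  exact Fintype.prod_equiv e.symm _ _ fun _ => rfl

namespace MvPowerSeries

theorem le_order_pow_mul {σ R : Type*} [CommSemiring R] {f : MvPowerSeries σ R}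
    (hf : f.constantCoeff = 0) (n : ℕ) (g : MvPowerSeries σ R) :
    (n : ℕ∞) ≤ (f ^ n * g).order :=
  (le_order_pow_of_constantCoeff_eq_zero n hf).trans (le_self_add.trans le_order_mul)

end MvPowerSeries

namespace MvPolynomial

section Order
variable {σ R : Type*} [CommSemiring R]

theorem homogeneousComponent_eq_zero_of_lt_order {P : MvPolynomial σ R} {m : ℕ}
    (h : (m : ℕ∞) < (P : MvPowerSeries σ R).order) : homogeneousComponent m P = 0 :=
  homogeneousComponent_eq_zero' m P fun d hd hdm => mem_support_iff.1 hd <| by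
    rw [← coeff_coe]
    exact MvPowerSeries.coeff_of_lt_order (hdm ▸ h)

theorem IsHomogeneous.order_coe_le {P : MvPolynomial σ R} {n : ℕ} (hP : P.IsHomogeneous n)
    (h0 : P ≠ 0) : (P : MvPowerSeries σ R).order ≤ n := by
  obtain ⟨d, hd⟩ := support_nonempty.2 h0
  have hdeg : d.degree = n := by
    rw [Finsupp.degree_eq_weight_one]
    exact hP (mem_support_iff.1 hd)
  rw [← hdeg]
  exact MvPowerSeries.order_le (by rw [coeff_coe]; exact mem_support_iff.1 hd)

theorem le_order_coe_X_pow_mul_add (m : ℕ) (g₀ g₁ g₂ : MvPolynomial (Fin 2) R) :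
    (m : ℕ∞) ≤ ((X 0 ^ m * g₀ + X 1 ^ m * g₁ + (X 0 + X 1) ^ m * g₂ : MvPolynomial (Fin 2) R) :
      MvPowerSeries (Fin 2) R).order := by
  have hX : ∀ i, (MvPowerSeries.X i : MvPowerSeries (Fin 2) R).constantCoeff = 0 :=
    MvPowerSeries.constantCoeff_X
  simp only [coe_add, coe_mul, coe_pow, coe_X]
  refine (le_min (le_min ?_ ?_) ?_).trans <| MvPowerSeries.min_order_le_add.trans'
    (min_le_min_right _ MvPowerSeries.min_order_le_add)
  · exact MvPowerSeries.le_order_pow_mul (hX 0) _ _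
  · exact MvPowerSeries.le_order_pow_mul (hX 1) _ _
  · exact MvPowerSeries.le_order_pow_mul (by rw [map_add, hX, hX, add_zero]) _ _

variable {T Q : MvPolynomial σ R} {n : ℕ}

theorem homogeneousComponent_add_of_lt_order (hT : T.IsHomogeneous n)
    (hQ : (n : ℕ∞) < (Q : MvPowerSeries σ R).order) {m : ℕ} (hm : m ≤ n) :
    homogeneousComponent m (T + Q) = if m = n then T else 0 := by
  rw [map_add, homogeneousComponent_of_mem ((mem_homogeneousSubmodule n T).2 hT),
    homogeneousComponent_eq_zero_of_lt_order ((Nat.cast_le.2 hm).trans_lt hQ), add_zero]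

theorem sInf_homogeneousComponent_ne_zero_add_of_lt_order (hT : T.IsHomogeneous n) (hT0 : T ≠ 0)
    (hQ : (n : ℕ∞) < (Q : MvPowerSeries σ R).order) :
    sInf {m : ℕ | homogeneousComponent m (T + Q) ≠ 0} = n := by
  have hn : n ∈ {m : ℕ | homogeneousComponent m (T + Q) ≠ 0} := by
    rwa [Set.mem_ofPred_eq, homogeneousComponent_add_of_lt_order hT hQ le_rfl, if_pos rfl]
  refine le_antisymm (Nat.sInf_le hn) (le_csInf ⟨n, hn⟩ fun m hm => ?_)
  by_contra! hlt
  exact hm (by rw [homogeneousComponent_add_of_lt_order hT hQ hlt.le, if_neg hlt.ne])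

end Order

section GeomSum
variable {R : Type*} [CommRing R]

noncomputable def homGeomSum (n : ℕ) : MvPolynomial (Fin 2) R :=
  ∑ i ∈ Finset.range n, X 0 ^ i * X 1 ^ (n - 1 - i)

theorem homGeomSum_mul_sub (n : ℕ) :
    (homGeomSum n : MvPolynomial (Fin 2) R) * (X 0 - X 1) = X 0 ^ n - X 1 ^ n :=
  geom_sum₂_mul _ _ n

theorem isHomogeneous_homGeomSum (n : ℕ) :
    (homGeomSum n : MvPolynomial (Fin 2) R).IsHomogeneous (n - 1) :=
  IsHomogeneous.sum _ _ _ fun i hi => by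
    have := (isHomogeneous_X_pow (R := R) (0 : Fin 2) i).mul (isHomogeneous_X_pow 1 (n - 1 - i))
    rwa [Nat.add_sub_cancel' (Nat.le_sub_one_of_lt (Finset.mem_range.1 hi))] at this

theorem map_homGeomSum {S : Type*} [CommRing S] (f : R →+* S) (n : ℕ) :
    map f (homGeomSum n) = homGeomSum n := by
  simp [homGeomSum]

theorem homGeomSum_ne_zero [Nontrivial R] {n : ℕ} (hn : n ≠ 0) :
    (homGeomSum n : MvPolynomial (Fin 2) R) ≠ 0 := by
  intro h
  have := congrArg (eval ![1, 0]) (homGeomSum_mul_sub (R := R) n)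
  simp [h, zero_pow hn] at this

theorem _root_.Polynomial.homogenize_prod_X_sub_C {K : Type*} [CommRing K] (s : Finset K) :
    (∏ η ∈ s, (Polynomial.X - Polynomial.C η)).homogenize s.card =
      ∏ η ∈ s, (X 0 - C η * X 1) := by
  rw [Finset.card_eq_sum_ones,
    Polynomial.homogenize_finsetProd fun η _ => by exact Polynomial.natDegree_X_sub_C_le η]
  simp [Polynomial.homogenize_X one_ne_zero]

theorem X_pow_sub_X_pow_eq_prod {K : Type*} [CommRing K] [IsDomain K] {n : ℕ} (hn : 0 < n)
    {ζ : K} (hζ : IsPrimitiveRoot ζ n) :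
    (X 0 ^ n - X 1 ^ n : MvPolynomial (Fin 2) K) =
      ∏ η ∈ Polynomial.nthRootsFinset n (1 : K), (X 0 - C η * X 1) := by
  have h := congrArg (Polynomial.homogenize · n) (Polynomial.X_pow_sub_one_eq_prod hn hζ)
  have hprod := Polynomial.homogenize_prod_X_sub_C (Polynomial.nthRootsFinset n (1 : K))
  rw [hζ.card_nthRootsFinset] at hprod
  simpa [hprod] using h

end GeomSum

section Factorization
variable {K : Type*} [Field K] {n : ℕ} {ζ : K}

theorem homGeomSum_eq_prod [DecidableEq K] (hn : 0 < n) (hζ : IsPrimitiveRoot ζ n) :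
    (homGeomSum n : MvPolynomial (Fin 2) K) =
      ∏ η ∈ (Polynomial.nthRootsFinset n (1 : K)).erase 1, (X 0 - C η * X 1) := by
  have hX : (X 0 - X 1 : MvPolynomial (Fin 2) K) ≠ 0 := fun h => by
    simpa using congrArg (eval ![1, 0]) h
  apply mul_right_cancel₀ hX
  rw [homGeomSum_mul_sub, X_pow_sub_X_pow_eq_prod hn hζ,
    ← Finset.prod_erase_mul _ _ (Polynomial.one_mem_nthRootsFinset hn), map_one, one_mul]

theorem exists_homGeomSum_eq_prod_linearForms (hn : 0 < n) (hζ : IsPrimitiveRoot ζ n) :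
    ∃ a b : Fin (n - 1) → K,
      (homGeomSum n : MvPolynomial (Fin 2) K) = ∏ i, (C (a i) * X 0 + C (b i) * X 1) ∧
        ∀ i j, i ≠ j → a i * b j ≠ a j * b i := by
  classical
  have hcard : ((Polynomial.nthRootsFinset n (1 : K)).erase 1).card = n - 1 := by
    rw [Finset.card_erase_of_mem (Polynomial.one_mem_nthRootsFinset hn), hζ.card_nthRootsFinset]
  obtain ⟨e, he, hprod⟩ := Finset.exists_injective_prod_fin_eq _ hcard
    fun η => (X 0 - C η * X 1 : MvPolynomial (Fin 2) K)
  refine ⟨fun _ => 1, fun i => -e i, ?_, fun i j hij h => hij (he ?_)⟩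
  · rw [homGeomSum_eq_prod hn hζ, ← hprod]
    simp [sub_eq_add_neg]
  · simpa using h.symm

end Factorization

section Kasami
variable {R : Type*} [CommRing R] [CharP R 2]

theorem aeval_add_one_mul_eq {t : ℕ} {phi : MvPolynomial (Fin 2) R}
    (hphi : phi * ((X 0 + X 1) * (X 0 + 1) * (X 1 + 1)) =
      X 0 ^ t + X 1 ^ t + 1 + (X 0 + X 1 + 1) ^ t) :
    aeval (fun i => (X i + 1 : MvPolynomial (Fin 2) R)) phi * ((X 0 + X 1) * X 0 * X 1) =
      (X 0 + 1) ^ t + (X 1 + 1) ^ t + 1 + (X 0 + X 1 + 1) ^ t := by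
  have h := congrArg (aeval fun i : Fin 2 => (X i + 1 : MvPolynomial (Fin 2) R)) hphi
  simp only [map_mul, map_add, map_pow, map_one, aeval_X] at h
  have two : (2 : MvPolynomial (Fin 2) R) = 0 := CharTwo.two_eq_zero
  have hsum : (X 0 + 1 + (X 1 + 1) : MvPolynomial (Fin 2) R) = X 0 + X 1 := by
    linear_combination two
  have hX : ∀ i, (X i + 1 + 1 : MvPolynomial (Fin 2) R) = X i := fun i => by
    linear_combination two
  rwa [hsum, hX, hX] at h

theorem mul_homGeomSum (n : ℕ) :
    (X 0 + X 1) * X 0 * X 1 * (homGeomSum n : MvPolynomial (Fin 2) R) =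
      X 0 * X 1 ^ (n + 1) + X 0 ^ (n + 1) * X 1 := by
  have h := homGeomSum_mul_sub (R := R) n
  rw [CharTwo.sub_eq_add, CharTwo.sub_eq_add] at h
  linear_combination X 0 * X 1 * h

theorem exists_aeval_add_one_eq_homGeomSum_add [IsDomain R] {k : ℕ} (hk : 2 ≤ k)
    {phi : MvPolynomial (Fin 2) R}
    (hphi : phi * ((X 0 + X 1) * (X 0 + 1) * (X 1 + 1)) =
      X 0 ^ (2 ^ (2 * k) - 2 ^ k + 1) + X 1 ^ (2 ^ (2 * k) - 2 ^ k + 1) + 1 +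
        (X 0 + X 1 + 1) ^ (2 ^ (2 * k) - 2 ^ k + 1)) :
    ∃ Q : MvPolynomial (Fin 2) R,
      aeval (fun i => (X i + 1 : MvPolynomial (Fin 2) R)) phi = homGeomSum (2 ^ k - 1) + Q ∧
        ((2 ^ k - 2 : ℕ) : ℕ∞) < (Q : MvPowerSeries (Fin 2) R).order := by
  set D : MvPolynomial (Fin 2) R := (X 0 + X 1) * X 0 * X 1
  set Q := aeval (fun i => (X i + 1 : MvPolynomial (Fin 2) R)) phi - homGeomSum (2 ^ k - 1)
  obtain ⟨g₀, g₁, g₂, hsum⟩ :=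
    exists_kasami_sum_eq (by omega : k ≠ 0) (X 0 : MvPolynomial (Fin 2) R) (X 1)
  have hq : 2 ^ k - 1 + 1 = 2 ^ k := Nat.sub_add_cancel Nat.one_le_two_pow
  have hQD : Q * D =
      X 0 ^ 2 ^ (k + 1) * g₀ + X 1 ^ 2 ^ (k + 1) * g₁ + (X 0 + X 1) ^ 2 ^ (k + 1) * g₂ := by
    have := mul_homGeomSum (R := R) (2 ^ k - 1)
    rw [hq] at this
    rw [sub_mul, aeval_add_one_mul_eq hphi, hsum, mul_comm _ D, this, add_sub_cancel_left]
  refine ⟨Q, by rw [add_sub_cancel], ?_⟩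
  have hrem : ((2 ^ (k + 1) : ℕ) : ℕ∞) ≤
      ((Q * D : MvPolynomial (Fin 2) R) : MvPowerSeries (Fin 2) R).order :=
    hQD ▸ le_order_coe_X_pow_mul_add _ g₀ g₁ g₂
  have hD0 : D ≠ 0 := by
    refine mul_ne_zero (mul_ne_zero (fun h => ?_) (X_ne_zero 0)) (X_ne_zero 1)
    simpa using congrArg (eval ![1, 0]) h
  have hD : (D : MvPowerSeries (Fin 2) R).order ≤ 3 :=
    ((((isHomogeneous_X R 0).add (isHomogeneous_X R 1)).mul (isHomogeneous_X R 0)).mul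
      (isHomogeneous_X R 1)).order_coe_le hD0
  rw [coe_mul, MvPowerSeries.order_mul] at hrem
  by_contra! hle
  have := hrem.trans (add_le_add hle hD)
  norm_cast at this
  have hk4 : 2 ^ 2 ≤ 2 ^ k := Nat.pow_le_pow_right two_pos hk
  rw [pow_succ] at this
  omega

end Kasami

end MvPolynomial

/-- For the Kasami–Welch number `t = 2^(2k) - 2^k + 1` (k ≥ 2), the multiplicity of
`φ_t(x,y)` at `p = (1,1)` is `2^k - 2` (the least degree of a nonzero homogeneous component of
`φ_t(x+1, y+1)`), and the corresponding lowest homogeneous component (the tangent cone) factors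
over an algebraic closure of `F_2` as a product of `2^k - 2` pairwise non-proportional linear
forms.  Here `φ_t(x,y)` is the (unique) quotient of `x^t + y^t + 1 + (x+y+1)^t` by
`(x+y)(x+1)(y+1)` in `F_2[x,y]`. -/
theorem kasami_multiplicity_and_tangent_cone (k : ℕ) (hk : 2 ≤ k) (t : ℕ)
    (ht : t = 2 ^ (2 * k) - 2 ^ k + 1)
    (phi : MvPolynomial (Fin 2) (ZMod 2))
    (hphi : phi * ((X 0 + X 1) * (X 0 + 1) * (X 1 + 1)) =
      X 0 ^ t + X 1 ^ t + 1 + (X 0 + X 1 + 1) ^ t) :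
    sInf {m : ℕ | MvPolynomial.homogeneousComponent m
        (MvPolynomial.aeval (fun i : Fin 2 => (X i + 1 : MvPolynomial (Fin 2) (ZMod 2))) phi) ≠ 0} = 2 ^ k - 2 ∧
    ∃ a b : Fin (2 ^ k - 2) → AlgebraicClosure (ZMod 2),
      MvPolynomial.map (algebraMap (ZMod 2) (AlgebraicClosure (ZMod 2)))
          (MvPolynomial.homogeneousComponent (2 ^ k - 2)
            (MvPolynomial.aeval (fun i : Fin 2 => (X i + 1 : MvPolynomial (Fin 2) (ZMod 2))) phi)) =
        ∏ i, (C (a i) * X 0 + C (b i) * X 1) ∧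
      ∀ i j, i ≠ j → a i * b j ≠ a j * b i := by
  subst ht
  have hk4 : 2 ^ 2 ≤ 2 ^ k := Nat.pow_le_pow_right two_pos hk
  obtain ⟨Q, hψ, hQ⟩ := exists_aeval_add_one_eq_homGeomSum_add hk hphi
  have hT := isHomogeneous_homGeomSum (R := ZMod 2) (2 ^ k - 1)
  rw [Nat.sub_sub] at hT
  rw [hψ,
    sInf_homogeneousComponent_ne_zero_add_of_lt_order hT (homGeomSum_ne_zero (by omega)) hQ,
    homogeneousComponent_add_of_lt_order hT hQ le_rfl, if_pos rfl, map_homGeomSum]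
  have : NeZero ((2 ^ k - 1 : ℕ) : ZMod 2) :=
    ⟨by rw [CharTwo.natCast_two_pow_sub_one (by omega)]; exact one_ne_zero⟩
  obtain ⟨ζ, hζ⟩ :=
    HasEnoughRootsOfUnity.exists_primitiveRoot (AlgebraicClosure (ZMod 2)) (2 ^ k - 1)
  have := exists_homGeomSum_eq_prod_linearForms (by omega) hζ
  rw [Nat.sub_sub] at this
  exact ⟨rfl, this⟩
end

section
/- Let d ≥ 3 be an integer with d ≡ 3 (mod 4). Then φ_d(1,1) ≠ 0 in F_2; that is, the point p = (1,1) does not lie on the affine curve φ_d(x,y) = 0. -/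
open MvPolynomial

abbrev MvP := MvPolynomial (Fin 2) (ZMod 2)

noncomputable def mm (a b : ℕ) : Fin 2 →₀ ℕ := Finsupp.single 0 a + Finsupp.single 1 b

lemma mm_apply0 (a b : ℕ) : mm a b 0 = a := by simp [mm, Finsupp.single_apply]
lemma mm_apply1 (a b : ℕ) : mm a b 1 = b := by simp [mm, Finsupp.single_apply]

lemma mm_sub0 (a b : ℕ) : mm (a+1) b - Finsupp.single 0 1 = mm a b := by
  ext i; fin_cases i <;> simp [mm, Finsupp.single_apply]

lemma mm_sub1 (a b : ℕ) : mm a (b+1) - Finsupp.single 1 1 = mm a b := by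
  ext i; fin_cases i <;> simp [mm, Finsupp.single_apply]

lemma mem_supp0 (a b : ℕ) : (0 : Fin 2) ∈ (mm (a+1) b).support := by
  simp [Finsupp.mem_support_iff, mm_apply0]

lemma mem_supp1 (a b : ℕ) : (1 : Fin 2) ∈ (mm a (b+1)).support := by
  simp [Finsupp.mem_support_iff, mm_apply1]

lemma notMem_supp0 (b : ℕ) : (0 : Fin 2) ∉ (mm 0 b).support := by
  simp [Finsupp.mem_support_iff, mm_apply0]

lemma notMem_supp1 (a : ℕ) : (1 : Fin 2) ∉ (mm a 0).support := by
  simp [Finsupp.mem_support_iff, mm_apply1]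

lemma coeff_mul_X0 (a b : ℕ) (p : MvP) :
    coeff (mm (a+1) b) (p * X 0) = coeff (mm a b) p := by
  rw [coeff_mul_X', if_pos (mem_supp0 a b), mm_sub0]

lemma coeff_mul_X1 (a b : ℕ) (p : MvP) :
    coeff (mm a (b+1)) (p * X 1) = coeff (mm a b) p := by
  rw [coeff_mul_X', if_pos (mem_supp1 a b), mm_sub1]

lemma coeff_mul_X0' (b : ℕ) (p : MvP) : coeff (mm 0 b) (p * X 0) = 0 := by
  rw [coeff_mul_X', if_neg (notMem_supp0 b)]

lemma coeff_mul_X1' (a : ℕ) (p : MvP) : coeff (mm a 0) (p * X 1) = 0 := by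
  rw [coeff_mul_X', if_neg (notMem_supp1 a)]

lemma coeff_one_mm (a b : ℕ) (h : a ≠ 0 ∨ b ≠ 0) : coeff (mm a b) (1 : MvP) = 0 := by
  rw [coeff_one, if_neg]
  intro h0
  rcases h with h | h
  · exact h (by rw [← mm_apply0 a b, ← h0]; rfl)
  · exact h (by rw [← mm_apply1 a b, ← h0]; rfl)

/-- main induction for (X0+X1+1)^n -/
lemma key (n : ℕ) :
    coeff (mm 2 1) ((X 0 + X 1 + 1 : MvP)^n) = (if n % 4 = 3 then 1 else 0) ∧
    coeff (mm 2 0) ((X 0 + X 1 + 1 : MvP)^n) = (if n % 4 = 2 ∨ n % 4 = 3 then 1 else 0) ∧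
    coeff (mm 1 1) ((X 0 + X 1 + 1 : MvP)^n) = 0 ∧
    coeff (mm 1 0) ((X 0 + X 1 + 1 : MvP)^n) = (if n % 4 = 1 ∨ n % 4 = 3 then 1 else 0) ∧
    coeff (mm 0 1) ((X 0 + X 1 + 1 : MvP)^n) = (if n % 4 = 1 ∨ n % 4 = 3 then 1 else 0) ∧
    coeff (mm 0 0) ((X 0 + X 1 + 1 : MvP)^n) = 1 := by
  induction n with
  | zero =>
    have e : ∀ a b : ℕ, a ≠ 0 ∨ b ≠ 0 → coeff (mm a b) ((X 0 + X 1 + 1 : MvP)^0) = 0 := by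
      intro a b h; rw [pow_zero]; exact coeff_one_mm a b h
    have e0 : (0 : Fin 2 →₀ ℕ) = mm 0 0 := by ext i; simp [mm]
    refine ⟨?_, ?_, ?_, ?_, ?_, ?_⟩
    · rw [e 2 1 (by norm_num)]; norm_num
    · rw [e 2 0 (by norm_num)]; norm_num
    · rw [e 1 1 (by norm_num)]
    · rw [e 1 0 (by norm_num)]; norm_num
    · rw [e 0 1 (by norm_num)]; norm_num
    · rw [pow_zero, coeff_one, if_pos e0]
  | succ n ih =>
    obtain ⟨h21, h20, h11, h10, h01, h00⟩ := ih
    have expand : (X 0 + X 1 + 1 : MvP)^(n+1)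
        = (X 0 + X 1 + 1 : MvP)^n * X 0 + (X 0 + X 1 + 1 : MvP)^n * X 1
          + (X 0 + X 1 + 1 : MvP)^n := by ring
    have hmod : n % 4 = 0 ∨ n % 4 = 1 ∨ n % 4 = 2 ∨ n % 4 = 3 := by omega
    refine ⟨?_, ?_, ?_, ?_, ?_, ?_⟩ <;>
      rw [expand] <;> simp only [coeff_add]
    · rw [show (mm 2 1) = mm (1+1) 1 from rfl, coeff_mul_X0,
        show (mm (1+1) 1) = mm 2 (0+1) from rfl, coeff_mul_X1, h11, h20, h21]
      rcases hmod with h | h | h | h <;> simp [Nat.add_mod, h] <;> decide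
    · rw [show (mm 2 0) = mm (1+1) 0 from rfl, coeff_mul_X0, coeff_mul_X1', h10, h20]
      rcases hmod with h | h | h | h <;> simp [Nat.add_mod, h] <;> decide
    · rw [show (mm 1 1) = mm (0+1) 1 from rfl, coeff_mul_X0,
        show (mm (0+1) 1) = mm 1 (0+1) from rfl, coeff_mul_X1, h01, h10, h11]
      rcases hmod with h | h | h | h <;> simp [Nat.add_mod, h] <;> decide
    · rw [show (mm 1 0) = mm (0+1) 0 from rfl, coeff_mul_X0, coeff_mul_X1', h00, h10]
      rcases hmod with h | h | h | h <;> simp [Nat.add_mod, h] <;> decide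
    · rw [show (mm 0 1) = mm 0 (0+1) from rfl, coeff_mul_X1, coeff_mul_X0', h00, h01]
      rcases hmod with h | h | h | h <;> simp [Nat.add_mod, h] <;> decide
    · rw [coeff_mul_X0', coeff_mul_X1', h00]
      norm_num

lemma keyX0 (n : ℕ) :
    coeff (mm 2 1) ((X 0 + 1 : MvP)^n) = 0 ∧
    coeff (mm 1 1) ((X 0 + 1 : MvP)^n) = 0 ∧
    coeff (mm 0 1) ((X 0 + 1 : MvP)^n) = 0 := by
  induction n with
  | zero =>
    refine ⟨?_, ?_, ?_⟩ <;> rw [pow_zero] <;>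
      [exact coeff_one_mm 2 1 (by norm_num); exact coeff_one_mm 1 1 (by norm_num);
       exact coeff_one_mm 0 1 (by norm_num)]
  | succ n ih =>
    obtain ⟨h21, h11, h01⟩ := ih
    have expand : (X 0 + 1 : MvP)^(n+1) = (X 0 + 1 : MvP)^n * X 0 + (X 0 + 1 : MvP)^n := by ring
    refine ⟨?_, ?_, ?_⟩ <;> rw [expand] <;> simp only [coeff_add]
    · rw [show (mm 2 1) = mm (1+1) 1 from rfl, coeff_mul_X0, h11, h21]; norm_num
    · rw [show (mm 1 1) = mm (0+1) 1 from rfl, coeff_mul_X0, h01, h11]; norm_num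
    · rw [coeff_mul_X0', h01]; norm_num

lemma keyX1 (n : ℕ) :
    coeff (mm 2 1) ((X 1 + 1 : MvP)^n) = 0 ∧
    coeff (mm 2 0) ((X 1 + 1 : MvP)^n) = 0 := by
  induction n with
  | zero =>
    refine ⟨?_, ?_⟩ <;> rw [pow_zero] <;>
      [exact coeff_one_mm 2 1 (by norm_num); exact coeff_one_mm 2 0 (by norm_num)]
  | succ n ih =>
    obtain ⟨h21, h20⟩ := ih
    have expand : (X 1 + 1 : MvP)^(n+1) = (X 1 + 1 : MvP)^n * X 1 + (X 1 + 1 : MvP)^n := by ring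
    refine ⟨?_, ?_⟩ <;> rw [expand] <;> simp only [coeff_add]
    · rw [show (mm 2 1) = mm 2 (0+1) from rfl, coeff_mul_X1, h20, h21]; norm_num
    · rw [coeff_mul_X1', h20]; norm_num

noncomputable def fsub : MvP →ₐ[ZMod 2] MvP := aeval (fun i : Fin 2 => (X i + 1 : MvP))

lemma htwo : (2 : MvP) = 0 := by
  rw [show (2 : MvP) = 1 + 1 by norm_num, ← C_1, ← C_add,
    show ((1 : ZMod 2) + 1) = 0 from by decide, C_0]

lemma e0 : (0 : Fin 2 →₀ ℕ) = mm 0 0 := by ext i; simp [mm]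

lemma constcoeff_fsub (p : MvP) :
    constantCoeff (fsub p) = eval (fun _ : Fin 2 => (1 : ZMod 2)) p := by
  induction p using MvPolynomial.induction_on with
  | C a => simp [fsub]
  | add p q hp hq => simp only [map_add] at *; rw [hp, hq]
  | mul_X p i hp =>
    simp only [map_mul] at *
    rw [hp]
    simp [fsub]

/-- Janwa–Wilson: For `d ≥ 3` with `d ≡ 3 (mod 4)`, the point `(1,1)` does not
lie on the curve `φ_d(x,y) = 0`, where `φ_d(x,y)` is the (unique) quotient of
`x^d + y^d + 1 + (x+y+1)^d` by `(x+y)(x+1)(y+1)` in `F_2[x,y]`. -/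
theorem phi_3mod4_not_through_one_one (d : ℕ) (hd : 3 ≤ d) (hdmod : d % 4 = 3)
    (phi : MvPolynomial (Fin 2) (ZMod 2))
    (hphi : phi * ((X 0 + X 1) * (X 0 + 1) * (X 1 + 1)) =
      X 0 ^ d + X 1 ^ d + 1 + (X 0 + X 1 + 1) ^ d) :
    MvPolynomial.eval (fun _ => (1 : ZMod 2)) phi ≠ 0 := by
  have h2 := congrArg fsub hphi
  rw [map_mul] at h2
  have A : fsub ((X 0 + X 1) * (X 0 + 1) * (X 1 + 1)) = (X 0 + X 1) * X 0 * X 1 := by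
    simp only [fsub, map_mul, map_add, map_one, aeval_X]
    linear_combination (X 0 ^ 2 + X 1 ^ 2 + 3 * (X 0 * X 1) + 4 * X 0 + 4 * X 1 + 4 : MvP) * htwo
  have e4 : (X 0 + 1 + (X 1 + 1) + 1 : MvP) = X 0 + X 1 + 1 := by linear_combination htwo
  have B : fsub (X 0 ^ d + X 1 ^ d + 1 + (X 0 + X 1 + 1) ^ d)
      = (X 0 + 1 : MvP) ^ d + (X 1 + 1) ^ d + 1 + (X 0 + X 1 + 1) ^ d := by
    simp only [fsub, map_add, map_pow, map_one, aeval_X]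
    rw [e4]
  rw [A, B] at h2
  -- coefficient of x^2 y on the left
  have hL : coeff (mm 2 1) (fsub phi * ((X 0 + X 1) * X 0 * X 1))
      = coeff (mm 0 0) (fsub phi) := by
    have hexp : fsub phi * ((X 0 + X 1) * X 0 * X 1)
        = ((fsub phi * X 0) * X 0) * X 1 + ((fsub phi * X 1) * X 0) * X 1 := by ring
    rw [hexp, coeff_add, show (mm 2 1) = mm 2 (0+1) from rfl, coeff_mul_X1, coeff_mul_X1,
      show (mm 2 0) = mm (1+1) 0 from rfl, coeff_mul_X0, coeff_mul_X0, coeff_mul_X0,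
      coeff_mul_X1', add_zero]
  -- coefficient of x^2 y on the right
  have hR : coeff (mm 2 1) ((X 0 + 1 : MvP) ^ d + (X 1 + 1) ^ d + 1 + (X 0 + X 1 + 1) ^ d)
      = 1 := by
    rw [coeff_add, coeff_add, coeff_add, (keyX0 d).1, (keyX1 d).1,
      coeff_one_mm 2 1 (by norm_num), (key d).1, hdmod]
    norm_num
  have hc : coeff (mm 0 0) (fsub phi) = 1 := by
    rw [← hL, h2, hR]
  rw [← constcoeff_fsub, constantCoeff_eq, e0, hc]
  exact one_ne_zero
end

section
/- Let d ≥ 5 be an integer with d ≡ 1 (mod 4), and write d = 2^i · l + 1 with l odd (so i ≥ 2). Then the point p = (1,1) lies on the affine curve φ_d(x,y) = 0, and the multiplicity of φ_d(x,y) at (1,1) equals 2^i − 2. In particular, if d ≡ 5 (mod 8) then the multiplicity of φ_d(x,y) at (1,1) equals 2. -/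
open MvPolynomial Finset

private lemma hc_homog_mul {σ R : Type*} [CommRing R] {A B : MvPolynomial σ R} {a : ℕ}
    (hA : A.IsHomogeneous a) (m : ℕ) :
    homogeneousComponent (a + m) (A * B) = A * homogeneousComponent m B := by
  conv_lhs => rw [← sum_homogeneousComponent B]
  rw [Finset.mul_sum, map_sum]
  have hterm : ∀ j, homogeneousComponent (a + m) (A * homogeneousComponent j B)
      = if a + m = a + j then A * homogeneousComponent j B else 0 := by
    intro j
    exact homogeneousComponent_of_mem
      ((mem_homogeneousSubmodule _ _).2 (hA.mul (homogeneousComponent_isHomogeneous j B)))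
  rw [Finset.sum_congr rfl (fun j _ => hterm j)]
  simp_rw [Nat.add_left_cancel_iff]
  rw [Finset.sum_ite_eq (Finset.range (B.totalDegree + 1)) m
    (fun j => A * homogeneousComponent j B)]
  split_ifs with h
  · rfl
  · rw [homogeneousComponent_eq_zero, mul_zero]
    simpa using h

private lemma hc_homog_mul_zero {σ R : Type*} [CommRing R] {A B : MvPolynomial σ R} {a : ℕ}
    (hA : A.IsHomogeneous a) {n : ℕ} (hn : n < a) : homogeneousComponent n (A * B) = 0 := by
  conv_lhs => rw [← sum_homogeneousComponent B]
  rw [Finset.mul_sum, map_sum]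
  have hterm : ∀ j, homogeneousComponent n (A * homogeneousComponent j B)
      = if n = a + j then A * homogeneousComponent j B else 0 := by
    intro j
    exact homogeneousComponent_of_mem
      ((mem_homogeneousSubmodule _ _).2 (hA.mul (homogeneousComponent_isHomogeneous j B)))
  rw [Finset.sum_congr rfl (fun j _ => hterm j)]
  apply Finset.sum_eq_zero
  intro j _
  rw [if_neg]
  omega

private lemma odd_pow_expand {R : Type*} [CommRing R] (h2 : (2:R) = 0) (m : ℕ) (u : R) :
    ∃ g : R, (u + 1) ^ (2*m+1) = 1 + u + u^2 * g := by
  induction m with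
  | zero => exact ⟨0, by ring⟩
  | succ m ih =>
    obtain ⟨g, hg⟩ := ih
    refine ⟨1 + u + u^2*g + g, ?_⟩
    rw [show 2*(m+1)+1 = (2*m+1)+2 by ring, pow_add, hg]
    linear_combination (u + u^2 + u^3*g) * h2

private lemma two_monomials_ne_zero (a b c e : ℕ) (h : a ≠ b) :
    (X (0:Fin 2) ^ a * X 1 ^ c + X 0 ^ b * X 1 ^ e : MvPolynomial (Fin 2) (ZMod 2)) ≠ 0 := by
  intro hcontra
  have h1 := congrArg (MvPolynomial.coeff (Finsupp.single (0:Fin 2) a + Finsupp.single 1 c)) hcontra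
  rw [MvPolynomial.coeff_add, MvPolynomial.coeff_zero, X_pow_eq_monomial, X_pow_eq_monomial,
    monomial_mul, X_pow_eq_monomial, X_pow_eq_monomial, monomial_mul,
    MvPolynomial.coeff_monomial, MvPolynomial.coeff_monomial, if_pos rfl, if_neg ?_] at h1
  · simp at h1
  · intro he
    have h0 := DFunLike.congr_fun he (0 : Fin 2)
    simp [Finsupp.single_apply] at h0
    exact h h0.symm

/-- Hernando–McGuire: For `d ≥ 5` with `d ≡ 1 (mod 4)`, writing
`d = 2^i·l + 1` with `l` odd, the point `(1,1)` lies on the curve `φ_d(x,y) = 0` and the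
multiplicity of `φ_d(x,y)` at `(1,1)` (the least degree of a nonzero homogeneous component of
`φ_d(x+1,y+1)`) equals `2^i - 2`; in particular it equals `2` when `d ≡ 5 (mod 8)`.  Here
`φ_d(x,y)` is the (unique) quotient of `x^d + y^d + 1 + (x+y+1)^d` by `(x+y)(x+1)(y+1)`
in `F_2[x,y]`. -/
theorem phi_1mod4_multiplicity_at_one_one (d : ℕ) (hd : 5 ≤ d) (hdmod : d % 4 = 1)
    (i l : ℕ) (hl : Odd l) (hdil : d = 2 ^ i * l + 1)
    (phi : MvPolynomial (Fin 2) (ZMod 2))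
    (hphi : phi * ((X 0 + X 1) * (X 0 + 1) * (X 1 + 1)) =
      X 0 ^ d + X 1 ^ d + 1 + (X 0 + X 1 + 1) ^ d) :
    MvPolynomial.eval (fun _ => (1 : ZMod 2)) phi = 0 ∧
    sInf {m : ℕ | MvPolynomial.homogeneousComponent m
        (MvPolynomial.aeval (fun j : Fin 2 => (X j + 1 : MvPolynomial (Fin 2) (ZMod 2))) phi)
        ≠ 0} = 2 ^ i - 2 ∧
    (d % 8 = 5 →
      sInf {m : ℕ | MvPolynomial.homogeneousComponent m
        (MvPolynomial.aeval (fun j : Fin 2 => (X j + 1 : MvPolynomial (Fin 2) (ZMod 2))) phi)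
        ≠ 0} = 2) := by
  haveI : Fact (Nat.Prime 2) := ⟨Nat.prime_two⟩
  have h2 : (2 : MvPolynomial (Fin 2) (ZMod 2)) = 0 := by
    simpa using CharP.cast_eq_zero (MvPolynomial (Fin 2) (ZMod 2)) 2
  have hl2 : l % 2 = 1 := Nat.odd_iff.mp hl
  -- i ≥ 2
  have hi2 : 2 ≤ i := by
    by_contra hi
    interval_cases i <;> omega
  set q : ℕ := 2 ^ i with hq
  have hq4 : 4 ≤ q := by
    calc (4:ℕ) = 2^2 := rfl
    _ ≤ 2^i := Nat.pow_le_pow_right (by norm_num) hi2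
  set A : MvPolynomial (Fin 2) (ZMod 2) := MvPolynomial.aeval (fun j : Fin 2 => (X j + 1 : MvPolynomial (Fin 2) (ZMod 2))) phi with hA
  -- Frobenius
  have hfr : ∀ u v : MvPolynomial (Fin 2) (ZMod 2), (u + v) ^ q = u ^ q + v ^ q := fun u v => add_pow_char_pow u v 2 i
  -- shift the defining equation
  have hσ := congrArg (MvPolynomial.aeval (fun j : Fin 2 => (X j + 1 : MvPolynomial (Fin 2) (ZMod 2)))) hphi
  simp only [map_mul, map_add, map_pow, map_one, aeval_X] at hσ
  have e1 : (X 0 + 1 + (X 1 + 1) : MvPolynomial (Fin 2) (ZMod 2)) = X 0 + X 1 := by linear_combination h2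
  have e2 : (X 0 + 1 + 1 : MvPolynomial (Fin 2) (ZMod 2)) = X 0 := by linear_combination h2
  have e3 : (X 1 + 1 + 1 : MvPolynomial (Fin 2) (ZMod 2)) = X 1 := by linear_combination h2
  rw [e1, e2, e3] at hσ
  rw [← hA] at hσ
  -- hσ : A * ((X 0 + X 1) * X 0 * X 1) = (X 0+1)^d + (X 1+1)^d + 1 + (X 0+X 1+1)^d
  set G : MvPolynomial (Fin 2) (ZMod 2) := (X 0 + X 1) * X 0 * X 1 with hGdef
  have hGhom : G.IsHomogeneous 3 := by
    have := (((isHomogeneous_X (ZMod 2) (0 : Fin 2)).add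
      (isHomogeneous_X (ZMod 2) (1 : Fin 2))).mul
        (isHomogeneous_X (ZMod 2) (0 : Fin 2))).mul (isHomogeneous_X (ZMod 2) (1 : Fin 2))
    simpa using this
  -- expand the powers
  have hpow : ∀ u : MvPolynomial (Fin 2) (ZMod 2), (u + 1) ^ d = (u + 1) * (u ^ q + 1) ^ l := by
    intro u
    rw [hdil, pow_succ, pow_mul, hfr, one_pow, mul_comm ((u^q + 1)^l)]
  obtain ⟨mℓ, hmℓ⟩ := hl
  have hml : l = 2 * mℓ + 1 := hmℓ
  obtain ⟨gx, hgx⟩ := odd_pow_expand h2 mℓ ((X 0 : MvPolynomial (Fin 2) (ZMod 2)) ^ q)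
  obtain ⟨gy, hgy⟩ := odd_pow_expand h2 mℓ ((X 1 : MvPolynomial (Fin 2) (ZMod 2)) ^ q)
  obtain ⟨gs, hgs⟩ := odd_pow_expand h2 mℓ (((X 0 : MvPolynomial (Fin 2) (ZMod 2)) + X 1) ^ q)
  rw [← hml] at hgx hgy hgs
  set main : MvPolynomial (Fin 2) (ZMod 2) := (X 0) ^ q * X 1 + X 0 * (X 1) ^ q with hmaindef
  have hF : (X 0 + 1 : MvPolynomial (Fin 2) (ZMod 2))^d + (X 1 + 1)^d + 1 + (X 0 + X 1 + 1)^d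
      = main + ( ((X 0 : MvPolynomial (Fin 2) (ZMod 2))^q)^2 * ((X 0 + 1) * gx) + ((X 1 : MvPolynomial (Fin 2) (ZMod 2))^q)^2 * ((X 1 + 1) * gy)
          + (((X 0 : MvPolynomial (Fin 2) (ZMod 2)) + X 1)^q)^2 * ((X 0 + X 1 + 1) * gs) ) := by
    rw [hpow (X 0), hpow (X 1), hpow (X 0 + X 1), hgx, hgy, hgs, hfr (X 0) (X 1), hmaindef]
    linear_combination (2 + X 0 + X 1 + (X 0 : MvPolynomial (Fin 2) (ZMod 2))^q + (X 1 : MvPolynomial (Fin 2) (ZMod 2))^q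
      + X 0 * (X 0 : MvPolynomial (Fin 2) (ZMod 2))^q + X 1 * (X 1 : MvPolynomial (Fin 2) (ZMod 2))^q) * h2
  rw [hF] at hσ
  -- homogeneity facts
  have hXq : ((X 0 : MvPolynomial (Fin 2) (ZMod 2)) ^ q).IsHomogeneous q := by
    simpa using (isHomogeneous_X (ZMod 2) (0 : Fin 2)).pow q
  have hYq : ((X 1 : MvPolynomial (Fin 2) (ZMod 2)) ^ q).IsHomogeneous q := by
    simpa using (isHomogeneous_X (ZMod 2) (1 : Fin 2)).pow q
  have hSq : (((X 0 : MvPolynomial (Fin 2) (ZMod 2)) + X 1) ^ q).IsHomogeneous q := by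
    simpa using ((isHomogeneous_X (ZMod 2) (0 : Fin 2)).add
      (isHomogeneous_X (ZMod 2) (1 : Fin 2))).pow q
  have hXq2 : (((X 0 : MvPolynomial (Fin 2) (ZMod 2)) ^ q) ^ 2).IsHomogeneous (q * 2) := hXq.pow 2
  have hYq2 : (((X 1 : MvPolynomial (Fin 2) (ZMod 2)) ^ q) ^ 2).IsHomogeneous (q * 2) := hYq.pow 2
  have hSq2 : ((((X 0 : MvPolynomial (Fin 2) (ZMod 2)) + X 1) ^ q) ^ 2).IsHomogeneous (q * 2) := hSq.pow 2
  have hmon1 : ((X 0 : MvPolynomial (Fin 2) (ZMod 2)) ^ q * X 1).IsHomogeneous (q + 1) :=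
    hXq.mul (isHomogeneous_X (ZMod 2) (1 : Fin 2))
  have hmon2 : ((X 0 : MvPolynomial (Fin 2) (ZMod 2)) * (X 1) ^ q).IsHomogeneous (q + 1) := by
    simpa [Nat.add_comm] using (isHomogeneous_X (ZMod 2) (0 : Fin 2)).mul hYq
  have hmainhom : main.IsHomogeneous (q + 1) := hmon1.add hmon2
  -- homogeneous components of the RHS
  have hcF : ∀ n ≤ q + 1, homogeneousComponent n
      (main + ( ((X 0 : MvPolynomial (Fin 2) (ZMod 2))^q)^2 * ((X 0 + 1) * gx) + ((X 1 : MvPolynomial (Fin 2) (ZMod 2))^q)^2 * ((X 1 + 1) * gy)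
          + (((X 0 : MvPolynomial (Fin 2) (ZMod 2)) + X 1)^q)^2 * ((X 0 + X 1 + 1) * gs) ))
      = if n = q + 1 then main else 0 := by
    intro n hn
    have hnlt : n < q * 2 := by omega
    simp only [map_add]
    rw [hc_homog_mul_zero hXq2 hnlt, hc_homog_mul_zero hYq2 hnlt, hc_homog_mul_zero hSq2 hnlt,
      homogeneousComponent_of_mem ((mem_homogeneousSubmodule _ _).2 hmainhom)]
    simp
  -- relate components of A to components of the RHS
  have hGA : ∀ m : ℕ, G * homogeneousComponent m A = homogeneousComponent (3 + m)
      (main + ( ((X 0 : MvPolynomial (Fin 2) (ZMod 2))^q)^2 * ((X 0 + 1) * gx) + ((X 1 : MvPolynomial (Fin 2) (ZMod 2))^q)^2 * ((X 1 + 1) * gy)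
          + (((X 0 : MvPolynomial (Fin 2) (ZMod 2)) + X 1)^q)^2 * ((X 0 + X 1 + 1) * gs) )) := by
    intro m
    rw [← hσ, mul_comm A G, hc_homog_mul hGhom]
  have hGne : G ≠ 0 := by
    have hGeq : G = X (0:Fin 2) ^ 2 * X 1 ^ 1 + X 0 ^ 1 * X 1 ^ 2 := by rw [hGdef]; ring
    rw [hGeq]
    exact two_monomials_ne_zero 2 1 1 2 (by norm_num)
  have hlow : ∀ m, m < q - 2 → homogeneousComponent m A = 0 := by
    intro m hm
    have h := hGA m
    rw [hcF (3 + m) (by omega), if_neg (by omega)] at h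
    rcases mul_eq_zero.mp h with h' | h'
    · exact absurd h' hGne
    · exact h'
  have hmainne : main ≠ 0 := by
    have hmeq : main = X (0:Fin 2) ^ q * X 1 ^ 1 + X 0 ^ 1 * X 1 ^ q := by rw [hmaindef]; ring
    rw [hmeq]
    exact two_monomials_ne_zero q 1 1 q (by omega)
  have hne : homogeneousComponent (q - 2) A ≠ 0 := by
    have h := hGA (q - 2)
    rw [show 3 + (q - 2) = q + 1 by omega, hcF (q+1) le_rfl, if_pos rfl] at h
    intro h0
    rw [h0, mul_zero] at h
    exact hmainne h.symm
  -- the infimum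
  have hsinf : sInf {m : ℕ | homogeneousComponent m A ≠ 0} = q - 2 := by
    apply le_antisymm
    · exact Nat.sInf_le hne
    · refine le_csInf ⟨_, hne⟩ fun m hm => ?_
      rcases Nat.lt_or_ge m (q - 2) with hcon | hcon
      · exact absurd (hlow m hcon) hm
      · exact hcon
  refine ⟨?_, hsinf, ?_⟩
  · -- the point lies on the curve
    have h0 : homogeneousComponent 0 A = 0 := hlow 0 (by omega)
    rw [homogeneousComponent_zero] at h0
    have hc0 : MvPolynomial.coeff 0 A = 0 := by
      have := congrArg constantCoeff h0
      simpa using this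
    have e5 : (MvPolynomial.aeval (fun _ : Fin 2 => (0:ZMod 2))) A
        = (MvPolynomial.aeval (fun _ : Fin 2 => (1:ZMod 2))) phi := by
      rw [hA, comp_aeval_apply]
      have hfe : (fun i : Fin 2 => (MvPolynomial.aeval (fun _ : Fin 2 => (0:ZMod 2))) ((X i + 1 : MvPolynomial (Fin 2) (ZMod 2)))) = fun _ : Fin 2 => (1:ZMod 2) := by
        funext j
        simp
      rw [hfe]
    calc MvPolynomial.eval (fun _ : Fin 2 => (1 : ZMod 2)) phi
        = MvPolynomial.aeval (fun _ : Fin 2 => (1:ZMod 2)) phi := rfl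
      _ = MvPolynomial.aeval (fun _ : Fin 2 => (0:ZMod 2)) A := e5.symm
      _ = MvPolynomial.eval (fun _ : Fin 2 => (0:ZMod 2)) A := by
          simp
      _ = MvPolynomial.coeff 0 A := by rw [eval_zero', constantCoeff_eq]
      _ = 0 := hc0
  · -- d ≡ 5 mod 8 implies i = 2
    intro h8
    have hieq : i = 2 := by
      rcases Nat.lt_or_ge i 3 with h | h
      · omega
      · exfalso
        have h8d : (8:ℕ) ∣ 2 ^ i := by
          calc (8:ℕ) = 2^3 := rfl
          _ ∣ 2^i := pow_dvd_pow 2 h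
        have h8d2 : (8:ℕ) ∣ d - 1 := by
          rw [hdil, hq]
          simpa using h8d.mul_right l
        obtain ⟨c, hc⟩ := h8d2
        omega
    rw [hsinf, hq, hieq]
    norm_num
end
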